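/- arXiv:1512.06564 — 2 statements merged into one kernel-verified Lean document; each statement's English description precedes it below -/
import Mathlib

section
/- Let P be a polyhedron in R^d in general position with bounding half-spaces H_1,...,H_n, and let J be an element of the abstract simplicial complex 𝓕 of P. Then for every point x in the affine subspace V(J, ã, b̃) = {x ∈ ℝ^d : f_j(ã, b̃, x) = 0 for all j ∈ J}, the following identity holds: ∏_{j ∈ {1,...,n} \ J} H(f_j(ã, b̃, x)) = ∑_{F ∈ 𝓕_J} ∏_{j ∈ F \ J} (H(f_j(ã, b̃, x)) − 1), where 𝓕_J = {F ∈ 𝓕 : J ⊆ F}. -/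
/-!
On `V(J)` the left-hand side is the indicator of `x ∈ P`, and the right-hand side is the
alternating count `∑ (-1)^|K|` over the sets `K` of constraints violated at `x` for which
`J ∪ K ∈ 𝓕`. This count vanishes as soon as some constraint is violated, by induction on their
number: walk from `x` towards a generic point `y` of the relative interior of the face `F_J`
(general position provides one) and stop at the first point `z` where a group `Z` of violated
constraints becomes tight. By genericity the hyperplanes of `Z` coincide on `V(J)`, so a set of
violated constraints meeting `Z` spans a face together with `J` iff it still does after adding
all of `Z`. This splits the count at `x` into the difference of the counts at `z` for `J` and
for `J ∪ Z`, which are equal by induction.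
-/

open MeasureTheory Real

noncomputable section

/-- Heaviside function: `H(t) = 1` for `t ≥ 0` and `H(t) = 0` for `t < 0`. -/
def Hv (t : ℝ) : ℝ := if 0 ≤ t then 1 else 0

/-- `f_j(a,b,x) = ∑_i a_{ij} x_i + b_j`. -/
def lf {d n : ℕ} (a : Matrix (Fin d) (Fin n) ℝ) (b : Fin n → ℝ) (j : Fin n)
    (x : EuclideanSpace ℝ (Fin d)) : ℝ :=
  (∑ i, a i j * x i) + b j

/-- The polyhedron `P(a,b) = {x | f_j(a,b,x) ≥ 0 for all j}`. -/
def poly {d n : ℕ} (a : Matrix (Fin d) (Fin n) ℝ) (b : Fin n → ℝ) :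
    Set (EuclideanSpace ℝ (Fin d)) :=
  {x | ∀ j, 0 ≤ lf a b j x}

/-- The face `F_j(a,b) = P(a,b) ∩ {x | f_j(a,b,x) = 0}`. -/
def face {d n : ℕ} (a : Matrix (Fin d) (Fin n) ℝ) (b : Fin n → ℝ) (j : Fin n) :
    Set (EuclideanSpace ℝ (Fin d)) :=
  {x ∈ poly a b | lf a b j x = 0}

/-- The affine subspace `V(J,a,b) = {x | f_j(a,b,x) = 0 for all j ∈ J}`. -/
def VJ {d n : ℕ} (J : Finset (Fin n)) (a : Matrix (Fin d) (Fin n) ℝ) (b : Fin n → ℝ) :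
    Set (EuclideanSpace ℝ (Fin d)) :=
  {x | ∀ j ∈ J, lf a b j x = 0}

/-- `J` belongs to the abstract simplicial complex `𝓕(a,b)`, i.e. `⋂_{j∈J} F_j(a,b) ≠ ∅`. -/
def inComplex {d n : ℕ} (a : Matrix (Fin d) (Fin n) ℝ) (b : Fin n → ℝ)
    (J : Finset (Fin n)) : Prop :=
  (⋂ j ∈ J, face a b j).Nonempty

/-- The polyhedron `P(a,b)` is in general position: whenever the faces indexed by `J`
have a common point, the corresponding columns of `a` are linearly independent. -/
def GeneralPosition {d n : ℕ} (a : Matrix (Fin d) (Fin n) ℝ) (b : Fin n → ℝ) : Prop :=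
  ∀ J : Finset (Fin n), inComplex a b J →
    LinearIndependent ℝ (fun j : J => fun i : Fin d => a i (j : Fin n))

/-- `H_j` is a bounding half-space of `P(a,b)`, i.e. `F_j` is a facet: there is a point
where exactly the `j`-th constraint is active. -/
def IsBoundingFacet {d n : ℕ} (a : Matrix (Fin d) (Fin n) ℝ) (b : Fin n → ℝ)
    (j : Fin n) : Prop :=
  ∃ x : EuclideanSpace ℝ (Fin d), lf a b j x = 0 ∧ ∀ k, k ≠ j → 0 < lf a b k x

/-- Determinant of the Gram matrix `α_J(a) = (∑_k a_{ki} a_{kj})_{i,j ∈ J}`. -/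
def gramDet {d n : ℕ} (a : Matrix (Fin d) (Fin n) ℝ) (J : Finset (Fin n)) : ℝ :=
  Matrix.det (Matrix.of fun i j : J => ∑ k, a k (i : Fin n) * a k (j : Fin n))

/-- `φ_F(a,b) = ∫_{ℝ^d} exp(-|x|²/2) ∏_{j∈F} H(-f_j(a,b,x)) dx`. -/
def phiF {d n : ℕ} (F : Finset (Fin n)) (a : Matrix (Fin d) (Fin n) ℝ)
    (b : Fin n → ℝ) : ℝ :=
  ∫ x : EuclideanSpace ℝ (Fin d),
    Real.exp (-(1 / 2) * ∑ i, x i ^ 2) * ∏ j ∈ F, Hv (-(lf a b j x))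

/-- `φ(a,b)` for a fixed abstract simplicial complex `𝓕`. -/
def phiC {d n : ℕ} (𝓕 : Finset (Finset (Fin n))) (a : Matrix (Fin d) (Fin n) ℝ)
    (b : Fin n → ℝ) : ℝ :=
  (2 * π) ^ (-(d : ℝ) / 2) *
    ∫ x : EuclideanSpace ℝ (Fin d),
      Real.exp (-(1 / 2) * ∑ i, x i ^ 2) *
        ∑ F ∈ 𝓕, ∏ j ∈ F, (Hv (lf a b j x) - 1)

/-- `IsMixedPartialOn S L f g` : on the set `S`, the iterated partial derivative of `f`
with respect to the variables listed in `L` exists and is given by `g`. -/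
def IsMixedPartialOn {n : ℕ} (S : Set (Fin n → ℝ)) :
    List (Fin n) → ((Fin n → ℝ) → ℝ) → ((Fin n → ℝ) → ℝ) → Prop
  | [], f, g => ∀ b ∈ S, g b = f b
  | j :: L, f, g => ∃ h : (Fin n → ℝ) → ℝ, IsMixedPartialOn S L f h ∧
      ∀ b ∈ S, HasDerivAt (fun t => h (Function.update b j t)) (g b) (b j)


open Finset Filter Topology

theorem LinearIndependent.surjective_pi {K V ι : Type*} [Field K] [AddCommGroup V] [Module K V]
    [Fintype ι] [DecidableEq ι] {φ : ι → Module.Dual K V} (h : LinearIndependent K φ) :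
    Function.Surjective (LinearMap.pi φ) := by
  rw [← LinearMap.dualMap_injective_iff, injective_iff_map_eq_zero]
  intro μ hμ
  have hsum : ∑ i, μ (Pi.single i 1) • φ i = 0 := by
    ext v
    have := LinearMap.congr_fun hμ v
    rw [LinearMap.dualMap_apply, pi_eq_sum_univ' (LinearMap.pi φ v), map_sum] at this
    simpa [mul_comm] using this
  have hcoeff := Fintype.linearIndependent_iff.1 h _ hsum
  refine LinearMap.pi_ext fun i c => ?_
  rw [show Pi.single i c = c • Pi.single i (1 : K) by rw [← Pi.single_smul, smul_eq_mul, mul_one],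
    map_smul, hcoeff i]
  simp

theorem AffineMap.apply_smul_add {E : Type*} [AddCommGroup E] [Module ℝ E] (g : E →ᵃ[ℝ] ℝ)
    (t : ℝ) (v w : E) : g (t • v + w) = t * g.linear v + g w := by
  rw [← vadd_eq_add, g.map_vadd, map_smul, smul_eq_mul, vadd_eq_add]

theorem eventually_pos_add_mul {a b : ℝ} (ha : 0 ≤ a) (hab : a = 0 → 0 < b) :
    ∀ᶠ t in 𝓝[>] 0, 0 < t * b + a := by
  rcases ha.eq_or_lt with rfl | ha
  · filter_upwards [self_mem_nhdsWithin] with t ht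
    simpa using mul_pos ht (hab rfl)
  · have : Continuous fun t : ℝ => t * b + a := by fun_prop
    exact nhdsWithin_le_nhds
      (continuousAt_const.eventually_lt this.continuousAt (x₀ := 0) (by simpa using ha))

theorem eventually_add_mul_ne_zero {b : ℝ} (c : ℝ) (hb : b ≠ 0) :
    ∀ᶠ t in 𝓝[>] 0, t * b + c ≠ 0 := by
  rcases eq_or_ne c 0 with rfl | hc
  · filter_upwards [self_mem_nhdsWithin] with t ht
    simpa using And.intro ht.ne' hb
  · have : Continuous fun t : ℝ => t * b + c := by fun_prop
    exact nhdsWithin_le_nhds (this.continuousAt.eventually_ne (by simpa using hc))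

theorem exists_lineMap_crossing {ι : Type*} {N : Finset ι} (hN : N.Nonempty) {p q : ι → ℝ}
    (hp : ∀ j ∈ N, p j < 0) (hq : ∀ j ∈ N, 0 < q j) :
    ∃ u ∈ Set.Ioo (0 : ℝ) 1, (∀ j ∈ N, AffineMap.lineMap (p j) (q j) u ≤ 0) ∧
      ∃ j ∈ N, AffineMap.lineMap (p j) (q j) u = 0 := by
  have hcross : ∀ j ∈ N, p j / (p j - q j) * (q j - p j) + p j = 0 := fun j hj => by
    have : p j - q j ≠ 0 := by linarith [hp j hj, hq j hj]
    field_simp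
    ring
  obtain ⟨j₀, hj₀, hmin⟩ := N.exists_min_image (fun j => p j / (p j - q j)) hN
  have hsub : p j₀ - q j₀ < 0 := by linarith [hp j₀ hj₀, hq j₀ hj₀]
  refine ⟨p j₀ / (p j₀ - q j₀), ⟨div_pos_of_neg_of_neg (hp j₀ hj₀) hsub, ?_⟩, fun j hj => ?_,
    j₀, hj₀, ?_⟩
  · rw [div_lt_one_of_neg hsub]
    linarith [hq j₀ hj₀]
  · rw [AffineMap.lineMap_apply_ring']
    nlinarith [hmin j hj, hcross j hj, hp j hj, hq j hj]
  · rw [AffineMap.lineMap_apply_ring', hcross j₀ hj₀]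

section LinkSum

variable {α : Type*} [DecidableEq α]

theorem Finset.sum_powerset_union_of_disjoint {β : Type*} [AddCommMonoid β] {s t : Finset α}
    (h : Disjoint s t) (g : Finset α → β) :
    ∑ K ∈ (s ∪ t).powerset, g K = ∑ A ∈ s.powerset, ∑ B ∈ t.powerset, g (A ∪ B) := by
  induction s using Finset.induction_on generalizing g with
  | empty => simp
  | insert a s ha ih =>
    rw [disjoint_insert_left] at h
    rw [insert_union, sum_powerset_insert (by simp [ha, h.1]), sum_powerset_insert ha,
      ih h.2, ih h.2]
    simp only [insert_union]

theorem Finset.sum_powerset_ite_empty_mul {s : Finset α} (hs : s.Nonempty) (a c : ℤ) :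
    ∑ A ∈ s.powerset, (if A = ∅ then a else c) * (-1) ^ #A = a - c := by
  have hsplit : ∀ A : Finset α,
      (if A = ∅ then a else c) * (-1) ^ #A = (if A = ∅ then a - c else 0) + c * (-1) ^ #A := by
    intro A
    split_ifs with hA <;> simp [hA]
  simp [hsplit, sum_add_distrib, ← mul_sum, sum_powerset_neg_one_pow_card_of_nonempty hs]

/-- The negated reduced Euler characteristic of the complex `{K ⊆ N | J ∪ K ∈ 𝓕}`, i.e. of the
link of `J` in `𝓕` restricted to `N` when `J` and `N` are disjoint. -/
def linkAltSum (𝓕 : Finset (Finset α)) (J N : Finset α) : ℤ :=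
  ∑ K ∈ N.powerset, if J ∪ K ∈ 𝓕 then (-1) ^ #K else 0

theorem linkAltSum_empty (𝓕 : Finset (Finset α)) (J : Finset α) :
    linkAltSum 𝓕 J ∅ = if J ∈ 𝓕 then 1 else 0 := by
  simp [linkAltSum]

theorem linkAltSum_eq_zero {𝓕 : Finset (Finset α)} {J : Finset α} (h : ∀ K, J ∪ K ∉ 𝓕)
    (N : Finset α) : linkAltSum 𝓕 J N = 0 :=
  sum_eq_zero fun K _ => if_neg (h K)

theorem linkAltSum_union {𝓕 : Finset (Finset α)} {J Z M : Finset α} (hZ : Z.Nonempty)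
    (hZM : Disjoint Z M)
    (h𝓕 : ∀ A ⊆ Z, A.Nonempty → ∀ B ⊆ M, (J ∪ (A ∪ B) ∈ 𝓕 ↔ J ∪ Z ∪ B ∈ 𝓕)) :
    linkAltSum 𝓕 J (Z ∪ M) = linkAltSum 𝓕 J M - linkAltSum 𝓕 (J ∪ Z) M := by
  rw [linkAltSum, sum_powerset_union_of_disjoint hZM, sum_comm, linkAltSum, linkAltSum,
    ← sum_sub_distrib]
  refine sum_congr rfl fun B hB => ?_
  rw [mem_powerset] at hB
  calc ∑ A ∈ Z.powerset, (if J ∪ (A ∪ B) ∈ 𝓕 then (-1) ^ #(A ∪ B) else 0)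
      = ∑ A ∈ Z.powerset, (if A = ∅ then (if J ∪ B ∈ 𝓕 then 1 else 0)
          else (if J ∪ Z ∪ B ∈ 𝓕 then 1 else 0)) * (-1) ^ #A * (-1) ^ #B := by
        refine sum_congr rfl fun A hA => ?_
        rw [mem_powerset] at hA
        rw [card_union_of_disjoint (hZM.mono hA hB), pow_add]
        rcases A.eq_empty_or_nonempty with rfl | hA'
        · simp
        · simp only [hA'.ne_empty, if_false, h𝓕 A hA hA' B hB]
          split_ifs <;> ring
    _ = _ := by
        rw [← sum_mul, sum_powerset_ite_empty_mul hZ]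
        split_ifs <;> ring

end LinkSum

namespace AffineSystem

variable {E ι : Type*} [AddCommGroup E] [Module ℝ E] (f : ι → E →ᵃ[ℝ] ℝ)

def IsFace (J : Finset ι) : Prop :=
  ∃ x, (∀ j, 0 ≤ f j x) ∧ ∀ j ∈ J, f j x = 0

def InGeneralPosition : Prop :=
  ∀ J, IsFace f J → LinearIndependent ℝ (fun j : J => (f j).linear)

def negSet [Fintype ι] (x : E) : Finset ι :=
  univ.filter fun j => f j x < 0

variable {f}

theorem IsFace.mono {J K : Finset ι} (hK : IsFace f K) (hJK : J ⊆ K) : IsFace f J :=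
  let ⟨x, hxP, hxK⟩ := hK
  ⟨x, hxP, fun j hj => hxK j (hJK hj)⟩

theorem isFace_union_iff [DecidableEq ι] {J Z A : Finset ι}
    (hZ : ∀ j ∈ Z, ∀ k ∈ Z, ∀ w, (∀ i ∈ J, f i w = 0) → f j w = 0 → f k w = 0)
    (hAZ : A ⊆ Z) (hA : A.Nonempty) (B : Finset ι) :
    IsFace f (J ∪ (A ∪ B)) ↔ IsFace f (J ∪ Z ∪ B) := by
  refine ⟨fun ⟨w, hwP, hw⟩ => ⟨w, hwP, fun k hk => ?_⟩, fun h => h.mono fun k hk => ?_⟩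
  · obtain ⟨j, hj⟩ := hA
    simp only [mem_union] at hk hw
    rcases hk with (hk | hk) | hk
    · exact hw k (.inl hk)
    · exact hZ j (hAZ hj) k hk w (fun i hi => hw i (.inl hi)) (hw j (.inr (.inl hj)))
    · exact hw k (.inr (.inr hk))
  · simp only [mem_union] at hk ⊢
    have := @hAZ k
    tauto

variable [Fintype ι] {J : Finset ι} {x : E}

theorem mem_negSet {j : ι} : j ∈ negSet f x ↔ f j x < 0 := by
  simp [negSet]

theorem negSet_eq_empty : negSet f x = ∅ ↔ ∀ j, 0 ≤ f j x := by
  simp [Finset.eq_empty_iff_forall_notMem, mem_negSet]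

theorem exists_relInterior (hgen : InGeneralPosition f) (hJ : IsFace f J) :
    ∃ y, (∀ j ∈ J, f j y = 0) ∧ ∀ j ∉ J, 0 < f j y := by
  classical
  obtain ⟨w, hwP, hwJ⟩ := hJ
  set T := univ.filter fun j => f j w = 0
  -- Independence of the constraints tight at `w` gives a direction `v` along which those in `J`
  -- stay tight and the others become positive.
  obtain ⟨v, hv⟩ := (hgen T ⟨w, hwP, by simp [T]⟩).surjective_pi
    fun j => if (j : ι) ∈ J then 0 else 1
  have hvT : ∀ j (hj : f j w = 0), (f j).linear v = if j ∈ J then 0 else 1 :=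
    fun j hj => congrFun hv ⟨j, by simp [T, hj]⟩
  have hpos : ∀ᶠ t in 𝓝[>] (0 : ℝ), ∀ j ∉ J, 0 < f j (t • v + w) := by
    refine eventually_all.2 fun j => ?_
    by_cases hj : j ∈ J
    · simp [hj]
    simp only [hj, not_false_eq_true, forall_const, AffineMap.apply_smul_add]
    exact eventually_pos_add_mul (hwP j) fun h0 => by simp [hvT j h0, hj]
  obtain ⟨t, ht⟩ := hpos.exists
  refine ⟨t • v + w, fun j hj => ?_, ht⟩
  simp [AffineMap.apply_smul_add, hvT j (hwJ j hj), hj, hwJ j hj]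

theorem exists_relInterior_generic (hgen : InGeneralPosition f) (hJ : IsFace f J)
    {κ : Type*} [Finite κ] (g : κ → E →ᵃ[ℝ] ℝ) :
    ∃ y, (∀ j ∈ J, f j y = 0) ∧ (∀ j ∉ J, 0 < f j y) ∧
      ∀ p, g p y = 0 → ∀ w, (∀ j ∈ J, f j w = 0) → g p w = 0 := by
  obtain ⟨y₀, hy₀J, hy₀⟩ := exists_relInterior hgen hJ
  set W : Submodule ℝ E := ⨅ j ∈ J, LinearMap.ker (f j).linear
  have hW : ∀ {w}, w ∈ W ↔ ∀ j ∈ J, (f j).linear w = 0 := by simp [W]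
  obtain ⟨v, hvW, hv⟩ := Module.Dual.exists_forall_mem_ne_zero_of_forall_exists W
    (fun p : {p // ∃ w ∈ W, (g p).linear w ≠ 0} => (g p).linear) fun p => p.2
  have hgood : ∀ᶠ t in 𝓝[>] (0 : ℝ), (∀ j ∉ J, 0 < f j (t • v + y₀)) ∧
      ∀ p, (∃ w ∈ W, (g p).linear w ≠ 0) → g p (t • v + y₀) ≠ 0 := by
    refine (eventually_all.2 fun j => ?_).and (eventually_all.2 fun p => ?_)
    · by_cases hj : j ∈ J
      · simp [hj]
      simp only [hj, not_false_eq_true, forall_const, AffineMap.apply_smul_add]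
      exact eventually_pos_add_mul (hy₀ j hj).le fun h0 => absurd h0 (hy₀ j hj).ne'
    · by_cases hp : ∃ w ∈ W, (g p).linear w ≠ 0
      · simp only [hp, forall_const, AffineMap.apply_smul_add]
        exact eventually_add_mul_ne_zero _ (hv ⟨p, hp⟩)
      · simp [hp]
  obtain ⟨t, htpos, htne⟩ := hgood.exists
  have hyJ : ∀ j ∈ J, f j (t • v + y₀) = 0 := fun j hj => by
    simp [AffineMap.apply_smul_add, hW.1 hvW j hj, hy₀J j hj]
  refine ⟨t • v + y₀, hyJ, htpos, fun p hp w hwJ => ?_⟩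
  have hwy : w - (t • v + y₀) ∈ W := hW.2 fun j hj => by
    rw [← vsub_eq_sub, AffineMap.linearMap_vsub, hwJ j hj, hyJ j hj, vsub_eq_sub, sub_zero]
  have hlin : (g p).linear (w - (t • v + y₀)) = 0 := by
    by_contra hne
    exact htne p ⟨_, hwy, hne⟩ hp
  rwa [← vsub_eq_sub, AffineMap.linearMap_vsub, hp, vsub_eq_sub, sub_zero] at hlin

theorem exists_crossing_point {y : E} (hx : ∀ j ∈ J, f j x = 0)
    (hyJ : ∀ j ∈ J, f j y = 0) (hy : ∀ j ∉ J, 0 < f j y) (hN : (negSet f x).Nonempty) :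
    ∃ u : ℝ, u ≠ 0 ∧ (∀ j ∈ J, f j (AffineMap.lineMap x y u) = 0) ∧
      negSet f (AffineMap.lineMap x y u) ⊆ negSet f x ∧
      (∀ j ∈ negSet f x, f j (AffineMap.lineMap x y u) ≤ 0) ∧
      ∃ j ∈ negSet f x, f j (AffineMap.lineMap x y u) = 0 := by
  have hNJ : ∀ j ∈ negSet f x, j ∉ J := fun j hj hjJ => by
    rw [mem_negSet, hx j hjJ] at hj
    exact lt_irrefl 0 hj
  obtain ⟨u, ⟨hu0, hu1⟩, hle, j₀, hj₀, hj₀z⟩ := exists_lineMap_crossing hN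
    (p := fun j => f j x) (q := fun j => f j y) (fun j hj => mem_negSet.1 hj)
    (fun j hj => hy j (hNJ j hj))
  simp only [AffineMap.apply_lineMap] at hle hj₀z ⊢
  refine ⟨u, hu0.ne', fun j hj => by simp [hx j hj, hyJ j hj], fun j hj => ?_, hle,
    j₀, hj₀, hj₀z⟩
  rw [mem_negSet, AffineMap.apply_lineMap, AffineMap.lineMap_apply_ring'] at hj
  rw [mem_negSet]
  by_contra hjx
  by_cases hjJ : j ∈ J
  · simp [hx j hjJ, hyJ j hjJ] at hj
  · nlinarith [hy j hjJ]

variable [DecidableEq ι] {𝓕 : Finset (Finset ι)}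

theorem exists_linkAltSum_reduction (hgen : InGeneralPosition f)
    (h𝓕 : ∀ F, F ∈ 𝓕 ↔ IsFace f F) (hJ : IsFace f J) (hx : ∀ j ∈ J, f j x = 0)
    (hN : (negSet f x).Nonempty) :
    ∃ z Z, (∀ j ∈ J ∪ Z, f j z = 0) ∧ #(negSet f z) < #(negSet f x) ∧
      linkAltSum 𝓕 J (negSet f x) =
        linkAltSum 𝓕 J (negSet f z) - linkAltSum 𝓕 (J ∪ Z) (negSet f z) := by
  obtain ⟨y, hyJ, hy, hygen⟩ :=
    exists_relInterior_generic hgen hJ fun p : ι × ι => f p.1 x • f p.2 - f p.2 x • f p.1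
  obtain ⟨u, hu, hzJ, hMN, hle, j₀, hj₀, hj₀z⟩ := exists_crossing_point hx hyJ hy hN
  set z := AffineMap.lineMap x y u
  set Z := negSet f x \ negSet f z
  have hZz : ∀ j ∈ Z, f j z = 0 := fun j hj =>
    le_antisymm (hle j (mem_sdiff.1 hj).1) (not_lt.1 fun h => (mem_sdiff.1 hj).2 (mem_negSet.2 h))
  have hZ : Z.Nonempty := ⟨j₀, mem_sdiff.2 ⟨hj₀, by simp [mem_negSet, hj₀z]⟩⟩
  -- `f j x • f k - f k x • f j` vanishes at `x` and at `z`, hence at `y`, hence on all of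
  -- `{w | ∀ i ∈ J, f i w = 0}` by the genericity of `y`.
  have hcoinc : ∀ j ∈ Z, ∀ k ∈ Z, ∀ w, (∀ i ∈ J, f i w = 0) → f j w = 0 → f k w = 0 := by
    intro j hj k hk w hwJ hjw
    have hgy : (f j x • f k - f k x • f j) y = 0 := by
      have hgz : (f j x • f k - f k x • f j) z = 0 := by simp [hZz j hj, hZz k hk]
      rw [AffineMap.apply_lineMap, AffineMap.lineMap_apply_ring'] at hgz
      simpa [mul_comm, hu] using hgz
    have hgw := hygen (j, k) hgy w hwJ
    simp only [AffineMap.coe_sub, AffineMap.coe_smul, Pi.sub_apply, Pi.smul_apply, smul_eq_mul,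
      hjw, mul_zero, sub_zero, mul_eq_zero] at hgw
    exact hgw.resolve_left (mem_negSet.1 (mem_sdiff.1 hj).1).ne
  refine ⟨z, Z, fun j hj => ?_, card_lt_card ⟨hMN, fun h => ?_⟩, ?_⟩
  · rcases mem_union.1 hj with hj | hj
    exacts [hzJ j hj, hZz j hj]
  · obtain ⟨j, hj⟩ := hZ
    exact (mem_sdiff.1 hj).2 (h (mem_sdiff.1 hj).1)
  · conv_lhs => rw [← sdiff_union_of_subset hMN]
    refine linkAltSum_union hZ sdiff_disjoint fun A hAZ hA B _ => ?_
    rw [h𝓕, h𝓕]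
    exact isFace_union_iff hcoinc hAZ hA B

theorem linkAltSum_negSet (hgen : InGeneralPosition f) (h𝓕 : ∀ F, F ∈ 𝓕 ↔ IsFace f F)
    (hx : ∀ j ∈ J, f j x = 0) :
    linkAltSum 𝓕 J (negSet f x) = if negSet f x = ∅ then 1 else 0 := by
  induction hcard : #(negSet f x) using Nat.strong_induction_on generalizing J x with
  | _ m ih =>
  by_cases hJ : IsFace f J
  · rcases (negSet f x).eq_empty_or_nonempty with hN | hN
    · rw [hN, linkAltSum_empty, if_pos ((h𝓕 J).2 hJ), if_pos rfl]
    obtain ⟨z, Z, hz, hlt, heq⟩ := exists_linkAltSum_reduction hgen h𝓕 hJ hx hN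
    rw [heq, ih _ (hcard ▸ hlt) (fun j hj => hz j (mem_union_left Z hj)) rfl,
      ih _ (hcard ▸ hlt) hz rfl, sub_self, if_neg hN.ne_empty]
  · have hN : negSet f x ≠ ∅ := fun hN => hJ ⟨x, negSet_eq_empty.1 hN, hx⟩
    rw [if_neg hN, linkAltSum_eq_zero fun K hK => hJ (((h𝓕 _).1 hK).mono subset_union_left)]

theorem prod_Hv_sdiff (hx : ∀ j ∈ J, f j x = 0) :
    ∏ j ∈ univ \ J, Hv (f j x) = if negSet f x = ∅ then 1 else 0 := by
  split_ifs with hN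
  · refine prod_eq_one fun j _ => if_pos (negSet_eq_empty.1 hN j)
  · obtain ⟨j, hj⟩ := nonempty_iff_ne_empty.2 hN
    have hjJ : j ∉ J := fun hjJ => (mem_negSet.1 hj).ne (hx j hjJ)
    exact prod_eq_zero (by simp [hjJ]) (if_neg (not_le.2 (mem_negSet.1 hj)))

theorem prod_Hv_sub_one (s : Finset ι) :
    ∏ j ∈ s, (Hv (f j x) - 1) = if s ⊆ negSet f x then (-1) ^ #s else 0 := by
  have h : ∀ j, Hv (f j x) - 1 = if f j x < 0 then -1 else 0 := fun j => by
    unfold Hv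
    by_cases h : f j x < 0
    · simp [h, not_le.2 h]
    · simp [h, not_lt.1 h]
  simp only [h, prod_ite_zero, prod_const, subset_iff, mem_negSet]

theorem sum_prod_Hv_sub_one (hx : ∀ j ∈ J, f j x = 0) :
    ∑ F ∈ 𝓕.filter (fun F => J ⊆ F), ∏ j ∈ F \ J, (Hv (f j x) - 1) =
      (linkAltSum 𝓕 J (negSet f x) : ℝ) := by
  have hJN : Disjoint J (negSet f x) := disjoint_left.2 fun j hj hjN => by
    rw [mem_negSet, hx j hj] at hjN
    exact lt_irrefl 0 hjN
  simp only [prod_Hv_sub_one, linkAltSum, Int.cast_sum, Int.cast_pow,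
    Int.cast_neg, Int.cast_one, ← sum_filter, filter_filter]
  refine sum_nbij' (· \ J) (J ∪ ·) (fun F hF => ?_) (fun K hK => ?_) (fun F hF => ?_)
    (fun K hK => ?_) fun F _ => rfl
  · simp only [mem_filter, mem_powerset] at hF ⊢
    rw [union_sdiff_of_subset hF.2.1]
    exact ⟨hF.2.2, hF.1⟩
  · simp only [mem_filter, mem_powerset] at hK ⊢
    rw [union_sdiff_cancel_left (hJN.mono_right hK.1)]
    exact ⟨hK.2, subset_union_left, hK.1⟩
  · exact union_sdiff_of_subset (mem_filter.1 hF).2.1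
  · exact union_sdiff_cancel_left (hJN.mono_right (mem_powerset.1 (mem_filter.1 hK).1))

end AffineSystem

def dotDual (d : ℕ) : (Fin d → ℝ) →ₗ[ℝ] Module.Dual ℝ (EuclideanSpace ℝ (Fin d)) :=
  LinearMap.mk₂ ℝ (fun c v => ∑ i, c i * v i)
    (fun _ _ _ => by simp [add_mul, sum_add_distrib])
    (fun _ _ _ => by simp [mul_sum, mul_assoc])
    (fun _ _ _ => by simp [mul_add, sum_add_distrib])
    (fun _ _ _ => by simp [mul_sum, mul_left_comm])

theorem dotDual_apply {d : ℕ} (c : Fin d → ℝ) (v : EuclideanSpace ℝ (Fin d)) :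
    dotDual d c v = ∑ i, c i * v i :=
  rfl

theorem ker_dotDual (d : ℕ) : LinearMap.ker (dotDual d) = ⊥ := by
  refine LinearMap.ker_eq_bot'.2 fun c hc => funext fun i => ?_
  simpa [dotDual_apply] using LinearMap.congr_fun hc (EuclideanSpace.single i 1)

def lfAffine {d n : ℕ} (a : Matrix (Fin d) (Fin n) ℝ) (b : Fin n → ℝ) (j : Fin n) :
    EuclideanSpace ℝ (Fin d) →ᵃ[ℝ] ℝ where
  toFun := lf a b j
  linear := dotDual d fun i => a i j
  map_vadd' x v := by
    simp only [lf, dotDual_apply, vadd_eq_add, PiLp.add_apply, mul_add, sum_add_distrib]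
    ring

section

variable {d n : ℕ} {a : Matrix (Fin d) (Fin n) ℝ} {b : Fin n → ℝ}

theorem poly_nonempty (hbound : ∀ j, IsBoundingFacet a b j) : (poly a b).Nonempty := by
  rcases isEmpty_or_nonempty (Fin n) with hn | hn
  · exact ⟨0, fun j => isEmptyElim j⟩
  obtain ⟨j⟩ := hn
  obtain ⟨x, hxj, hx⟩ := hbound j
  refine ⟨x, fun k => ?_⟩
  rcases eq_or_ne k j with rfl | hk
  exacts [hxj.ge, (hx k hk).le]

theorem isFace_lfAffine_iff (hP : (poly a b).Nonempty) {F : Finset (Fin n)} :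
    AffineSystem.IsFace (lfAffine a b) F ↔ inComplex a b F := by
  refine ⟨fun ⟨x, hxP, hxF⟩ => ⟨x, Set.mem_iInter₂.2 fun j hj => ⟨hxP, hxF j hj⟩⟩,
    fun ⟨x, hx⟩ => ?_⟩
  rw [Set.mem_iInter₂] at hx
  rcases F.eq_empty_or_nonempty with rfl | ⟨j, hj⟩
  · obtain ⟨w, hw⟩ := hP
    exact ⟨w, hw, by simp⟩
  · exact ⟨x, (hx j hj).1, fun k hk => (hx k hk).2⟩

theorem GeneralPosition.inGeneralPosition (h : GeneralPosition a b) :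
    AffineSystem.InGeneralPosition (lfAffine a b) := fun J ⟨x, hxP, hxJ⟩ =>
  (h J ⟨x, Set.mem_iInter₂.2 fun j hj => ⟨hxP, hxJ j hj⟩⟩).map' _ (ker_dotDual d)

end

theorem stmt0_general {d n : ℕ} (ta : Matrix (Fin d) (Fin n) ℝ) (tb : Fin n → ℝ)
    (hgen : GeneralPosition ta tb)
    (hbound : ∀ j, IsBoundingFacet ta tb j)
    (𝓕 : Finset (Finset (Fin n))) (h𝓕 : ∀ F, F ∈ 𝓕 ↔ inComplex ta tb F)
    (J : Finset (Fin n))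
    (x : EuclideanSpace ℝ (Fin d)) (hx : x ∈ VJ J ta tb) :
    ∏ j ∈ Finset.univ \ J, Hv (lf ta tb j x)
      = ∑ F ∈ 𝓕.filter (fun F => J ⊆ F), ∏ j ∈ F \ J, (Hv (lf ta tb j x) - 1) := by
  have h𝓕' : ∀ F, F ∈ 𝓕 ↔ AffineSystem.IsFace (lfAffine ta tb) F := fun F =>
    (h𝓕 F).trans (isFace_lfAffine_iff (poly_nonempty hbound)).symm
  have hx' : ∀ j ∈ J, lfAffine ta tb j x = 0 := hx
  calc ∏ j ∈ univ \ J, Hv (lf ta tb j x)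
      = if AffineSystem.negSet (lfAffine ta tb) x = ∅ then 1 else 0 :=
        AffineSystem.prod_Hv_sdiff hx'
    _ = (linkAltSum 𝓕 J (AffineSystem.negSet (lfAffine ta tb) x) : ℝ) := by
      rw [AffineSystem.linkAltSum_negSet hgen.inGeneralPosition h𝓕' hx']
      split_ifs <;> simp
    _ = ∑ F ∈ 𝓕.filter (fun F => J ⊆ F), ∏ j ∈ F \ J, (Hv (lf ta tb j x) - 1) :=
      (AffineSystem.sum_prod_Hv_sub_one hx').symm

/-- Proposition 11: inclusion–exclusion identity on a face.
If `P` is in general position with bounding half-spaces `H_1,…,H_n` and `J ∈ 𝓕`, then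
for every `x ∈ V(J,ã,b̃)`,
`∏_{j ∈ [n]\J} H(f_j(ã,b̃,x)) = ∑_{F ∈ 𝓕_J} ∏_{j ∈ F\J} (H(f_j(ã,b̃,x)) − 1)`. -/
theorem stmt0 {d n : ℕ} (ta : Matrix (Fin d) (Fin n) ℝ) (tb : Fin n → ℝ)
    (hgen : GeneralPosition ta tb)
    (hbound : ∀ j, IsBoundingFacet ta tb j)
    (𝓕 : Finset (Finset (Fin n))) (h𝓕 : ∀ F, F ∈ 𝓕 ↔ inComplex ta tb F)
    (J : Finset (Fin n)) (hJ : J ∈ 𝓕)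
    (x : EuclideanSpace ℝ (Fin d)) (hx : x ∈ VJ J ta tb) :
    ∏ j ∈ Finset.univ \ J, Hv (lf ta tb j x)
      = ∑ F ∈ 𝓕.filter (fun F => J ⊆ F), ∏ j ∈ F \ J, (Hv (lf ta tb j x) - 1) :=
  stmt0_general ta tb hgen hbound 𝓕 h𝓕 J x hx

end
end

section
/- Let n = d and let ã ∈ ℝ^{d×d} be an upper triangular matrix with nonzero diagonal entries ã_{11},...,ã_{dd} (so the columns of ã are linearly independent and the polyhedron P = {x : f_j(ã,b̃,x) ≥ 0, 1 ≤ j ≤ d} is a simplicial cone, whose abstract simplicial complex 𝓕 is the full power set of {1,...,d}). Let D = diag(ã_{11},...,ã_{dd}). Then for every J ⊆ {1,...,d}, the derivative g^J(a,b) = (∏_{j∈J} ∂/∂b_j) φ(a,b) evaluated at (D, 0) satisfies g^J(D, 0) = (2π)^{−d/2} · (∏_{j∈J} |ã_{jj}|)^{−1} · (π/2)^{(d−|J|)/2}. -/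
open MeasureTheory Real

noncomputable section

/-- `φ(a,b)` for a simplicial cone (`n = d`), whose abstract simplicial complex is the
full power set of `{1,…,d}`. -/
def phiAll {d : ℕ} (a : Matrix (Fin d) (Fin d) ℝ) (b : Fin d → ℝ) : ℝ :=
  (2 * π) ^ (-(d : ℝ) / 2) *
    ∫ x : EuclideanSpace ℝ (Fin d),
      Real.exp (-(1 / 2) * ∑ i, x i ^ 2) *
        ∑ F : Finset (Fin d), ∏ j ∈ F, (Hv (lf a b j x) - 1)

/-! For a diagonal matrix `D` the constraints decouple. Since
`∑_{F ⊆ [d]} ∏_{j ∈ F} (H_j - 1) = ∏_j H_j`, Fubini factors the Gaussian integral as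
`φ(D, b) = (2π)^{-d/2} ∏_j Φ(b_j / |D_j|)`, where `Φ` is the (unnormalised) Gaussian
distribution function. Each `∂/∂b_j` acts on the `j`-th factor alone and turns it into the
density `exp(-(b_j / D_j)² / 2) / |D_j|`; at `b = 0` this is `1 / |D_j|`, while each
untouched factor is `Φ(0) = √(π / 2)`. -/

open Set Finset

def gauss (x : ℝ) : ℝ := exp (-(1 / 2) * x ^ 2)

/-- Unnormalised: `gaussCdf s → √(2π)` as `s → ∞`. -/
def gaussCdf (s : ℝ) : ℝ := ∫ x in Iic s, gauss x

lemma gauss_zero : gauss 0 = 1 := by simp [gauss]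

lemma gauss_neg (x : ℝ) : gauss (-x) = gauss x := by simp [gauss]

lemma continuous_gauss : Continuous gauss := by unfold gauss; fun_prop

lemma integrable_gauss : Integrable gauss :=
  integrable_exp_neg_mul_sq (by norm_num)

lemma gaussCdf_zero : gaussCdf 0 = √(π / 2) := by
  have hsymm : gaussCdf 0 = ∫ x in Ioi 0, gauss x := by
    rw [gaussCdf]
    simpa only [gauss_neg, neg_zero] using (integral_comp_neg_Ioi 0 gauss).symm
  rw [hsymm]
  unfold gauss
  rw [integral_gaussian_Ioi, show π / (1 / 2) = (π / 2) * 2 ^ 2 by ring,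
    sqrt_mul (by positivity), sqrt_sq zero_le_two]
  ring

lemma hasDerivAt_gaussCdf (s : ℝ) : HasDerivAt gaussCdf (gauss s) s := by
  have hFTC : gaussCdf = fun u => gaussCdf 0 + ∫ x in (0 : ℝ)..u, gauss x := by
    funext u
    rw [← intervalIntegral.integral_Iic_sub_Iic integrable_gauss.integrableOn
      integrable_gauss.integrableOn, gaussCdf, gaussCdf, add_sub_cancel]
  rw [hFTC]
  exact (intervalIntegral.integral_hasDerivAt_right integrable_gauss.intervalIntegrable
    continuous_gauss.aestronglyMeasurable.stronglyMeasurableAtFilter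
    continuous_gauss.continuousAt).const_add _

lemma hasDerivAt_gaussCdf_div (r t : ℝ) :
    HasDerivAt (fun t => gaussCdf (t / r)) (gauss (t / r) / r) t := by
  simpa [Function.comp_def, div_eq_mul_inv] using
    (hasDerivAt_gaussCdf (t / r)).comp t ((hasDerivAt_id t).div_const r)

lemma integral_gauss_mul_Hv_sub {r : ℝ} (hr : 0 < r) (t : ℝ) :
    ∫ x, gauss x * Hv (t - r * x) = gaussCdf (t / r) := by
  have hind : (fun x => gauss x * Hv (t - r * x)) = (Iic (t / r)).indicator gauss := by
    funext x
    simp only [Hv, indicator, Set.mem_Iic, le_div_iff₀ hr, sub_nonneg, mul_comm x r]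
    split_ifs <;> simp
  rw [hind, integral_indicator measurableSet_Iic, gaussCdf]

lemma integral_gauss_mul_Hv {c : ℝ} (hc : c ≠ 0) (t : ℝ) :
    ∫ x, gauss x * Hv (c * x + t) = gaussCdf (t / |c|) := by
  rw [← integral_gauss_mul_Hv_sub (abs_pos.mpr hc)]
  rcases hc.lt_or_gt with hneg | hpos
  · simp only [abs_of_neg hneg, neg_mul, sub_neg_eq_add, add_comm]
  · rw [abs_of_pos hpos]
    conv_rhs => rw [← integral_neg_eq_self]
    simp only [gauss_neg, mul_neg, sub_neg_eq_add, add_comm]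

theorem EuclideanSpace.integral_prod_eq_prod {ι : Type*} [Fintype ι] (f : ι → ℝ → ℝ) :
    ∫ x : EuclideanSpace ℝ ι, ∏ i, f i (x i) = ∏ i, ∫ t, f i t := by
  rw [← integral_fintype_prod_volume_eq_prod, ← (PiLp.volume_preserving_toLp ι).integral_comp
    (MeasurableEquiv.toLp 2 (ι → ℝ)).measurableEmbedding]

lemma sum_powerset_prod_sub_one {ι R : Type*} [Fintype ι] [CommRing R] (h : ι → R) :
    ∑ F : Finset ι, ∏ j ∈ F, (h j - 1) = ∏ j, h j := by
  rw [← Finset.powerset_univ, ← prod_add_one]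
  simp only [sub_add_cancel]

lemma prod_ite_mem_eq_mul_pow {ι M : Type*} [Fintype ι] [DecidableEq ι] [CommMonoid M]
    (s : Finset ι) (f : ι → M) (c : M) :
    ∏ i, (if i ∈ s then f i else c) = (∏ i ∈ s, f i) * c ^ sᶜ.card := by
  rw [← prod_mul_prod_compl s, ← prod_const]
  congr 1 <;> refine prod_congr rfl fun i hi => ?_ <;> simp_all

lemma lf_diagonal {d : ℕ} (D b : Fin d → ℝ) (j : Fin d) (x : EuclideanSpace ℝ (Fin d)) :
    lf (Matrix.diagonal D) b j x = D j * x j + b j := by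
  simp [lf, Matrix.diagonal_apply]

lemma phiAll_diagonal {d : ℕ} {D : Fin d → ℝ} (hD : ∀ j, D j ≠ 0) (b : Fin d → ℝ) :
    phiAll (Matrix.diagonal D) b = (2 * π) ^ (-(d : ℝ) / 2) * ∏ j, gaussCdf (b j / |D j|) := by
  have hfactor : ∀ x : EuclideanSpace ℝ (Fin d),
      exp (-(1 / 2) * ∑ i, x i ^ 2) * ∑ F : Finset (Fin d),
          ∏ j ∈ F, (Hv (lf (Matrix.diagonal D) b j x) - 1)
        = ∏ j, gauss (x j) * Hv (D j * x j + b j) := by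
    intro x
    simp only [sum_powerset_prod_sub_one, lf_diagonal, mul_sum, exp_sum, prod_mul_distrib, gauss]
  simp only [phiAll, hfactor,
    EuclideanSpace.integral_prod_eq_prod (fun j t => gauss t * Hv (D j * t + b j)),
    integral_gauss_mul_Hv (hD _)]

lemma hasDerivAt_prod_update {ι : Type*} [Fintype ι] [DecidableEq ι] (G : ι → ℝ → ℝ) (b : ι → ℝ)
    (k : ι) {g' : ℝ}
    (hG : HasDerivAt (G k) g' (b k)) :
    HasDerivAt (fun t => ∏ j, G j (Function.update b k t j))
      (∏ j, Function.update (fun j => G j (b j)) k g' j) (b k) := by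
  have hfun : (fun t => ∏ j, G j (Function.update b k t j))
      = fun t => G k t * ∏ j ∈ univ \ {k}, G j (b j) := by
    funext t
    rw [← prod_update_of_mem (mem_univ k)]
    exact prod_congr rfl fun j _ => Function.apply_update G b k t j
  rw [hfun, prod_update_of_mem (mem_univ k)]
  exact hG.mul_const _

lemma isMixedPartialOn_const_mul_prod {n : ℕ} (C : ℝ) (F F' : Fin n → ℝ → ℝ)
    (hF : ∀ j t, HasDerivAt (F j) (F' j t) t) {L : List (Fin n)} (hL : L.Nodup) :
    IsMixedPartialOn univ L (fun b => C * ∏ j, F j (b j))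
      (fun b => C * ∏ j, if j ∈ L then F' j (b j) else F j (b j)) := by
  induction L with
  | nil => intro b _; simp
  | cons k L ih =>
    obtain ⟨hkL, hL⟩ := List.nodup_cons.mp hL
    refine ⟨_, ih hL, fun b _ => ?_⟩
    have hk : HasDerivAt (fun t => if k ∈ L then F' k t else F k t) (F' k (b k)) (b k) := by
      simpa only [if_neg hkL] using hF k (b k)
    refine ((hasDerivAt_prod_update (fun j t => if j ∈ L then F' j t else F j t) b k hk).const_mul
      C).congr_deriv (congrArg (C * ·) (prod_congr rfl fun j _ => ?_))
    rcases eq_or_ne j k with rfl | hjk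
    · simp
    · simp [hjk]

theorem stmt9_general {d : ℕ} (ta : Matrix (Fin d) (Fin d) ℝ)
    (hdiag : ∀ j, ta j j ≠ 0)
    (J : Finset (Fin d)) :
    ∃ g : (Fin d → ℝ) → ℝ,
      IsMixedPartialOn Set.univ (Finset.sort J (· ≤ ·))
        (phiAll (Matrix.diagonal fun j => ta j j)) g ∧
      g 0 = (2 * π) ^ (-(d : ℝ) / 2) * (∏ j ∈ J, |ta j j|)⁻¹ *
          (π / 2) ^ (((d : ℝ) - J.card) / 2) := by
  have hphi : phiAll (Matrix.diagonal fun j => ta j j)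
      = fun b => (2 * π) ^ (-(d : ℝ) / 2) * ∏ j, gaussCdf (b j / |ta j j|) :=
    funext (phiAll_diagonal hdiag)
  refine ⟨_, hphi ▸ isMixedPartialOn_const_mul_prod _ _ _
    (fun j => hasDerivAt_gaussCdf_div |ta j j|) (J.sort_nodup _), ?_⟩
  have hJ : J.card ≤ d := by simpa using J.card_le_univ
  simp only [Pi.zero_apply, zero_div, gauss_zero, gaussCdf_zero, mem_sort, one_div]
  rw [prod_ite_mem_eq_mul_pow, prod_inv_distrib, sqrt_eq_rpow, card_compl, Fintype.card_fin,
    ← rpow_natCast, ← rpow_mul (by positivity), Nat.cast_sub hJ]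
  ring_nf

/-- initial values for a simplicial cone: for `ã` upper triangular
with nonzero diagonal and `D = diag(ã_{11},…,ã_{dd})`, the derivative
`g^J = (∏_{j∈J} ∂/∂b_j) φ` satisfies
`g^J(D,0) = (2π)^{−d/2} (∏_{j∈J}|ã_{jj}|)^{−1} (π/2)^{(d−|J|)/2}`. -/
theorem stmt9 {d : ℕ} (ta : Matrix (Fin d) (Fin d) ℝ)
    (hupper : ∀ i j : Fin d, j < i → ta i j = 0)
    (hdiag : ∀ j, ta j j ≠ 0)
    (J : Finset (Fin d)) :
    ∃ g : (Fin d → ℝ) → ℝ,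
      IsMixedPartialOn Set.univ (Finset.sort J (· ≤ ·))
        (phiAll (Matrix.diagonal fun j => ta j j)) g ∧
      g 0 = (2 * π) ^ (-(d : ℝ) / 2) * (∏ j ∈ J, |ta j j|)⁻¹ *
          (π / 2) ^ (((d : ℝ) - J.card) / 2) :=
  stmt9_general ta hdiag J

end
end
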